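/- arXiv:2308.09265 — 2 statements merged into one kernel-verified Lean document; each statement's English description precedes it below -/
import Mathlib

section
/- Let γ ∈ ℝ and define the path components Φ^h(s) = h⁻ + ([h] - 3γ[h+b])s + 3γ[h+b]s² and Φ^b(s) = b⁻ + [b]s for s ∈ [0,1], where [h] = h⁺ - h⁻, [b] = b⁺ - b⁻, [h+b] = [h] + [b]. Then -g ∫₀¹ Φ^h(s) (d/ds)Φ^b(s) ds = -g ({h+b} - (γ/2)[h+b] - {b}) [b], where {w} = (w⁺+w⁻)/2. -/
/-- Path integral of the source: for the path
`Φ^h(s) = h⁻ + ([h]-3γ[h+b])s + 3γ[h+b]s²`, `Φ^b(s) = b⁻ + [b]s`,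
`-g ∫₀¹ Φ^h(s) (Φ^b)'(s) ds = -g({h+b} - (γ/2)[h+b] - {b})[b]`. -/
theorem path_source_integral (g γ hm hp bm bp : ℝ) (hg : 0 < g) :
    -g * ∫ s in (0:ℝ)..1,
        (hm + ((hp - hm) - 3 * γ * ((hp + bp) - (hm + bm))) * s
          + 3 * γ * ((hp + bp) - (hm + bm)) * s ^ 2)
        * deriv (fun s : ℝ => bm + (bp - bm) * s) s
      = -g * (((hp + bp) + (hm + bm)) / 2 - γ / 2 * ((hp + bp) - (hm + bm))
          - (bp + bm) / 2) * (bp - bm) := by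
  have hd : deriv (fun s : ℝ => bm + (bp - bm) * s) = fun _ => bp - bm := by
    ext s
    have : HasDerivAt (fun s : ℝ => bm + (bp - bm) * s) (bp - bm) s := by
      simpa using ((hasDerivAt_id s).const_mul (bp - bm)).const_add bm
    exact this.deriv
  rw [hd]
  have : ∫ s in (0:ℝ)..1,
      (hm + ((hp - hm) - 3 * γ * ((hp + bp) - (hm + bm))) * s
        + 3 * γ * ((hp + bp) - (hm + bm)) * s ^ 2) * (bp - bm)
      = ((hp + hm) / 2 - γ / 2 * ((hp + bp) - (hm + bm))) * (bp - bm) := by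
    rw [intervalIntegral.integral_mul_const]
    have : (∫ s in (0:ℝ)..1,
        (hm + ((hp - hm) - 3 * γ * ((hp + bp) - (hm + bm))) * s
          + 3 * γ * ((hp + bp) - (hm + bm)) * s ^ 2))
        = (hp + hm) / 2 - γ / 2 * ((hp + bp) - (hm + bm)) := by
      have h1 : IntervalIntegrable (fun s : ℝ => hm + ((hp - hm) - 3 * γ * ((hp + bp) - (hm + bm))) * s) MeasureTheory.volume 0 1 := by
        apply Continuous.intervalIntegrable; continuity
      have h2 : IntervalIntegrable (fun s : ℝ => 3 * γ * ((hp + bp) - (hm + bm)) * s ^ 2) MeasureTheory.volume 0 1 := by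
        apply Continuous.intervalIntegrable; continuity
      rw [intervalIntegral.integral_add h1 h2]
      have ha : IntervalIntegrable (fun _ : ℝ => hm) MeasureTheory.volume 0 1 :=
        intervalIntegrable_const
      have hb : IntervalIntegrable (fun s : ℝ => ((hp - hm) - 3 * γ * ((hp + bp) - (hm + bm))) * s) MeasureTheory.volume 0 1 := by
        apply Continuous.intervalIntegrable; continuity
      rw [intervalIntegral.integral_add ha hb,
        intervalIntegral.integral_const,
        intervalIntegral.integral_const_mul,
        intervalIntegral.integral_const_mul,
        integral_id, integral_pow]
      simp only [smul_eq_mul]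
      ring
    rw [this]
  rw [this]
  ring
end

section
/- Spike height formula for well-balanced schemes: under the same hypotheses as for the LxF scheme but with the modified identity ½(F(U_⋆⁻) + F(U_⋆⁺)) - ½(F(U⁻) + F(U⁺)) = ½ A_⋆ (U_⋆⁺ - U_⋆⁻) + ½ N̂_⋆ [b], where the first component of N̂_⋆ is α₁ and [b] = b⁺ - b⁻, the first component yields ½(m_⋆⁻ + m_⋆⁺) - m_{1/2} = ½ α₁ ((h_⋆⁺ + b⁺) - (h_⋆⁻ + b⁻)). -/
/-- The shallow water flux `F(h,m) = (m, m²/h + (g/2)h²)`. -/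
noncomputable def sweFlux (g : ℝ) (U : ℝ × ℝ) : ℝ × ℝ :=
  (U.2, U.2 ^ 2 / U.1 + g / 2 * U.1 ^ 2)

/-- Spike height formula for well-balanced schemes:
`{m}_⋆ - m_{1/2} = (α₁/2)[h_⋆ + b]`. -/
theorem wb_spike_height
    (g α1 α2 hsm msm hsp msp hm mm hp mp m12 bm bp : ℝ) (hg : 0 < g)
    (hhsm : 0 < hsm) (hhsp : 0 < hsp) (hhm : 0 < hm) (hhp : 0 < hp)
    (hmm : mm = m12) (hmp : mp = m12)
    (N : ℝ × ℝ) (hN : N.1 = α1)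
    (hflux : (1 / 2 : ℝ) • (sweFlux g (hsm, msm) + sweFlux g (hsp, msp))
        - (1 / 2 : ℝ) • (sweFlux g (hm, mm) + sweFlux g (hp, mp))
        = (1 / 2 : ℝ) • ((α1 * (hsp - hsm), α2 * (msp - msm)) : ℝ × ℝ)
          + ((1 / 2 : ℝ) * (bp - bm)) • N) :
    (msm + msp) / 2 - m12 = 1 / 2 * α1 * ((hsp + bp) - (hsm + bm)) := by
  have h1 := congrArg Prod.fst hflux
  simp [sweFlux, Prod.smul_def, hN] at h1
  linarith
end
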